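/- arXiv:1701.04203 — 4 statements merged into one kernel-verified Lean document; each statement's English description precedes it below -/
import Mathlib

section
/- Let n ≥ 1, 1 ≤ i ≤ n, and let p_{i,n-i}, p_{n-i+1,i-1} ∈ ℂ satisfy the uniform condition U_i := p_{n-i+1,i-1} − conj(p_{i,n-i}) = 0. Then the comould operators B_{(i-1,n-i)} = p_{i,n-i} x^i y^{n-i} ∂x + conj(p_{n-i+1,i-1}) x^{i-1} y^{n-i+1} ∂y and B_{(n-i,i-1)} = p_{n-i+1,i-1} x^{n-i+1} y^{i-1} ∂x + conj(p_{i,n-i}) x^{n-i} y^{i} ∂y commute: ⁅B_{(i-1,n-i)}, B_{(n-i,i-1)}⁆ = 0. -/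
open MvPolynomial

noncomputable section

/-- The polynomial ring `ℂ[x,y]`. -/
abbrev R2 : Type := MvPolynomial (Fin 2) ℂ

/-- The `ℂ`-derivation `f ∂x + g ∂y` of `ℂ[x,y]`, determined by `x ↦ f`, `y ↦ g`. -/
def der (f g : R2) : Derivation ℂ R2 R2 := MvPolynomial.mkDerivation ℂ ![f, g]

/-- The variable `x`. -/
def x : R2 := MvPolynomial.X 0

/-- The variable `y`. -/
def y : R2 := MvPolynomial.X 1

lemma derX0 (f g : R2) : der f g (MvPolynomial.X 0) = f := by
  simp [der, mkDerivation_X]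

lemma derX1 (f g : R2) : der f g (MvPolynomial.X 1) = g := by
  simp [der, mkDerivation_X]

lemma aux (a b : ℕ) (p q : ℂ) :
    ⁅der (C p * (x ^ (a+1) * y ^ b)) (C p * (x ^ a * y ^ (b+1))),
      der (C q * (x ^ (b+1) * y ^ a)) (C q * (x ^ b * y ^ (a+1)))⁆ = 0 := by
  unfold x y
  rcases a with _ | a <;> rcases b with _ | b <;>
  · apply MvPolynomial.derivation_ext
    rw [Fin.forall_fin_two]
    constructor <;>
    · rw [Derivation.commutator_apply]
      simp only [Derivation.leibniz, Derivation.leibniz_pow, derivation_C, derX0, derX1,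
        Nat.add_sub_cancel, Nat.succ_sub_one, pow_zero, pow_one, zero_smul, smul_zero,
        zero_mul, mul_zero, zero_add, add_zero, smul_eq_mul, Derivation.zero_apply, Derivation.map_one_eq_zero]
      ring

/-- Under the uniform condition `U_i = p_{n-i+1,i-1} − conj(p_{i,n-i}) = 0`, the comould
operators `B_{(i-1,n-i)}` and `B_{(n-i,i-1)}` commute. -/
theorem stmt2 (n i : ℕ) (hn : 1 ≤ n) (hi1 : 1 ≤ i) (hi2 : i ≤ n)
    (p₁ p₂ : ℂ) (hU : p₂ - starRingEnd ℂ p₁ = 0) :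
    ⁅der (C p₁ * (x ^ i * y ^ (n - i))) (C (starRingEnd ℂ p₂) * (x ^ (i - 1) * y ^ (n - i + 1))),
      der (C p₂ * (x ^ (n - i + 1) * y ^ (i - 1)))
        (C (starRingEnd ℂ p₁) * (x ^ (n - i) * y ^ i))⁆ = 0 := by
  have hq : p₂ = starRingEnd ℂ p₁ := by rwa [sub_eq_zero] at hU
  subst hq
  obtain ⟨a, rfl⟩ : ∃ a, i = a + 1 := ⟨i - 1, by omega⟩
  obtain ⟨b, rfl⟩ : ∃ b, n = a + 1 + b := ⟨n - (a + 1), by omega⟩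
  have h1 : a + 1 + b - (a + 1) = b := by omega
  have h2 : a + 1 - 1 = a := by omega
  rw [h1, h2, Complex.conj_conj]
  exact aux a b p₁ (starRingEnd ℂ p₁)

end
end

section
/- Let p_{2,0}, p_{1,1}, p_{0,2} ∈ ℂ and consider the four quadratic comould operators B_{(1,0)} = p_{2,0} x² ∂x + conj(p_{1,1}) x y ∂y, B_{(0,1)} = p_{1,1} x y ∂x + conj(p_{2,0}) y² ∂y, B_{(-1,2)} = p_{0,2} y² ∂x, and B_{(2,-1)} = conj(p_{0,2}) x² ∂y, as derivations of ℂ[x,y]. If either (p_{2,0} = conj(p_{1,1}) and p_{0,2} = 0) or (p_{1,1} = 0 and p_{0,2} = 0), then every pairwise Lie bracket of these four operators vanishes: ⁅B_n, B_m⁆ = 0 for all n, m ∈ {(1,0), (0,1), (-1,2), (2,-1)} (so the Lie algebra they generate is nilpotent of order 1). -/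
open MvPolynomial

noncomputable section

lemma der_x (f g : R2) : der f g x = f := MvPolynomial.mkDerivation_X _ _ 0
lemma der_y (f g : R2) : der f g y = g := MvPolynomial.mkDerivation_X _ _ 1

lemma bracket_zero (f g h k : R2)
    (h1 : der f g h = der h k f) (h2 : der f g k = der h k g) :
    ⁅der f g, der h k⁆ = 0 := by
  apply MvPolynomial.derivation_ext
  intro i
  fin_cases i
  · simp only [Derivation.commutator_apply, Derivation.zero_apply]
    show (der f g) ((der h k) x) - (der h k) ((der f g) x) = 0
    rw [der_x, der_x, h1, sub_self]
  · simp only [Derivation.commutator_apply, Derivation.zero_apply]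
    show (der f g) ((der h k) y) - (der h k) ((der f g) y) = 0
    rw [der_y, der_y, h2, sub_self]

lemma der00 : der 0 0 = 0 := by
  apply MvPolynomial.derivation_ext
  intro i
  fin_cases i
  · show der 0 0 x = 0; rw [der_x]
  · show der 0 0 y = 0; rw [der_y]

lemma comm_zero {D E : Derivation ℂ R2 R2} (h : ⁅D, E⁆ = 0) : ⁅E, D⁆ = 0 := by
  rw [← lie_skew, h, neg_zero]

lemma key1 (a : ℂ) :
    ⁅der (C a * x ^ 2) (C a * (x * y)),
      der (C (starRingEnd ℂ a) * (x * y)) (C (starRingEnd ℂ a) * y ^ 2)⁆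
    = (0 : Derivation ℂ R2 R2) := by
  apply bracket_zero <;>
    simp only [Derivation.leibniz, Derivation.leibniz_pow, MvPolynomial.derivation_C_mul,
      MvPolynomial.derivation_C, der_x, der_y, smul_eq_mul, smul_zero, mul_zero, add_zero,
      zero_add, zero_mul] <;> ring

lemma key2 (a : ℂ) :
    ⁅der (C a * x ^ 2) 0, der 0 (C (starRingEnd ℂ a) * y ^ 2)⁆
    = (0 : Derivation ℂ R2 R2) := by
  apply bracket_zero <;>
    simp only [Derivation.leibniz, Derivation.leibniz_pow, MvPolynomial.derivation_C_mul,
      MvPolynomial.derivation_C, der_x, der_y, smul_eq_mul, map_zero, mul_zero, smul_zero,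
      zero_mul, add_zero, zero_add]

set_option maxHeartbeats 1000000 in
/-- If `p₂₀ = conj p₁₁, p₀₂ = 0` (uniform) or `p₁₁ = 0, p₀₂ = 0` (holomorphic), then
all pairwise Lie brackets of the four quadratic comould operators vanish. -/
theorem stmt4 (p20 p11 p02 : ℂ)
    (h : (p20 = starRingEnd ℂ p11 ∧ p02 = 0) ∨ (p11 = 0 ∧ p02 = 0)) :
    ∀ D ∈ ({der (C p20 * x ^ 2) (C (starRingEnd ℂ p11) * (x * y)),
            der (C p11 * (x * y)) (C (starRingEnd ℂ p20) * y ^ 2),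
            der (C p02 * y ^ 2) 0,
            der 0 (C (starRingEnd ℂ p02) * x ^ 2)} : Set (Derivation ℂ R2 R2)),
    ∀ E ∈ ({der (C p20 * x ^ 2) (C (starRingEnd ℂ p11) * (x * y)),
            der (C p11 * (x * y)) (C (starRingEnd ℂ p20) * y ^ 2),
            der (C p02 * y ^ 2) 0,
            der 0 (C (starRingEnd ℂ p02) * x ^ 2)} : Set (Derivation ℂ R2 R2)),
      ⁅D, E⁆ = 0 := by
  rcases h with ⟨h1, h2⟩ | ⟨h1, h2⟩ <;> subst h1 h2 <;>
    simp only [starRingEnd_self_apply, Set.mem_insert_iff, Set.mem_singleton_iff]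
  all_goals
    rintro D (rfl|rfl|rfl|rfl) E (rfl|rfl|rfl|rfl) <;>
      (apply bracket_zero <;>
            simp only [Derivation.leibniz, Derivation.leibniz_pow,
              MvPolynomial.derivation_C_mul, MvPolynomial.derivation_C, der_x, der_y,
              smul_eq_mul, map_zero, mul_zero, smul_zero, zero_mul, add_zero, zero_add,
              MvPolynomial.C_0, zero_smul, zero_add, add_zero] <;>
            try ring)

end
end

section
/- Let a, b, c, e be natural numbers with a + b = c + e. Then the derivations x^a y^b·X_E and x^c y^e·X_E of ℂ[x,y] commute: ⁅x^{a+1} y^b ∂x + x^a y^{b+1} ∂y, x^{c+1} y^e ∂x + x^c y^{e+1} ∂y⁆ = 0. In particular, for a polynomial of homogeneous degree d, ⁅x^{i-1} y^{d-i}·X_E, x^{j-1} y^{d-j}·X_E⁆ = 0 for all 1 ≤ i, j ≤ d. -/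
open MvPolynomial

noncomputable section

lemma der_pow_mul_pow (f g : R2) (m n : ℕ) :
    der f g (x ^ m * y ^ n) =
      m • (x ^ (m - 1) * y ^ n * f) + n • (x ^ m * y ^ (n - 1) * g) := by
  rw [Derivation.leibniz, Derivation.leibniz_pow, Derivation.leibniz_pow, der_x, der_y]
  simp [smul_smul, mul_comm, mul_left_comm, mul_assoc, smul_add, add_comm]

lemma key (a b c e : ℕ) :
    der (x ^ (a + 1) * y ^ b) (x ^ a * y ^ (b + 1)) (x ^ (c + 1) * y ^ e) =
      (c + 1 + e) • (x ^ (a + c + 1) * y ^ (b + e)) := by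
  rw [der_pow_mul_pow, Nat.add_sub_cancel]
  cases e with
  | zero => simp only [pow_zero, Nat.cast_zero, zero_smul, add_zero, nsmul_eq_mul]; push_cast; ring
  | succ k =>
      simp only [Nat.add_sub_cancel, nsmul_eq_mul]
      push_cast
      ring

lemma key2_s6 (a b c e : ℕ) :
    der (x ^ (a + 1) * y ^ b) (x ^ a * y ^ (b + 1)) (x ^ c * y ^ (e + 1)) =
      (c + e + 1) • (x ^ (a + c) * y ^ (b + e + 1)) := by
  rw [der_pow_mul_pow, Nat.add_sub_cancel]
  cases c with
  | zero => simp only [pow_zero, Nat.cast_zero, zero_smul, add_zero, nsmul_eq_mul]; push_cast; ring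
  | succ k =>
      simp only [Nat.add_sub_cancel, nsmul_eq_mul]
      push_cast
      ring

/-- If `a + b = c + e`, the derivations `xᵃ yᵇ · X_E` and `xᶜ yᵉ · X_E` commute, where
`X_E = x∂x + y∂y` is the Euler derivation. -/
theorem stmt6 (a b c e : ℕ) (h : a + b = c + e) :
    ⁅der (x ^ (a + 1) * y ^ b) (x ^ a * y ^ (b + 1)),
      der (x ^ (c + 1) * y ^ e) (x ^ c * y ^ (e + 1))⁆ = 0 := by
  apply derivation_ext
  intro i
  fin_cases i <;>
  · show _ = (0 : Derivation ℂ R2 R2) _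
    rw [Derivation.commutator_apply]
    simp only [Derivation.coe_zero, Pi.zero_apply, Fin.mk_zero, Fin.mk_one]
    first
    | rw [show (X 0 : R2) = x from rfl, der_x, der_x, key a b c e, key c e a b,
        show c + 1 + e = a + 1 + b by omega, show c + a + 1 = a + c + 1 by omega,
        show e + b = b + e by omega, sub_self]
    | rw [show (X 1 : R2) = y from rfl, der_y, der_y, key2_s6 a b c e, key2_s6 c e a b,
        show c + e + 1 = a + b + 1 by omega, show c + a = a + c by omega,
        show e + b = b + e by omega, sub_self]

end
end

section
/- Let d ≥ 2 and let p_{i,j} ∈ ℂ for i + j = d be coefficients such that p_{0,d} = 0 and p_{d-i+1,i-1} = conj(p_{i,d-i}) for all i = 1, …, d. Consider the comould operators B_{(i-1,d-i)} = p_{i,d-i} x^i y^{d-i} ∂x + conj(p_{d-i+1,i-1}) x^{i-1} y^{d-i+1} ∂y (1 ≤ i ≤ d), B_{(-1,d)} = p_{0,d} y^d ∂x, and B_{(d,-1)} = conj(p_{0,d}) x^d ∂y, as derivations of ℂ[x,y]. Then every pairwise Lie bracket of these d + 2 operators vanishes; in particular, the Lie algebra 𝔟 they generate is nilpotent of order 1.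 -/
open MvPolynomial

noncomputable section

lemma der_X (f g : R2) (i : Fin 2) : der f g (X i) = ![f, g] i := by
  simp [der, mkDerivation_X]

lemma der_zero : der 0 0 = (0 : Derivation ℂ R2 R2) := by
  apply MvPolynomial.derivation_ext
  intro i
  fin_cases i <;> simp [der_X]

lemma euler_X (i : Fin 2) : der x y (X i) = X i := by
  fin_cases i <;> simp [der_X, x, y]

lemma euler_pow_x (n : ℕ) : der x y (x ^ n) = n • x ^ n := by
  induction n with
  | zero => simp
  | succ n ih =>
    rw [pow_succ, Derivation.leibniz, ih]
    have : der x y x = x := euler_X 0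
    rw [this]
    simp [smul_eq_mul, nsmul_eq_mul, pow_succ]
    ring

lemma euler_pow_y (n : ℕ) : der x y (y ^ n) = n • y ^ n := by
  induction n with
  | zero => simp
  | succ n ih =>
    rw [pow_succ, Derivation.leibniz, ih]
    have : der x y y = y := euler_X 1
    rw [this]
    simp [smul_eq_mul, nsmul_eq_mul, pow_succ]
    ring

lemma eig (c : ℂ) (a b : ℕ) :
    der x y (C c * (x ^ a * y ^ b)) = (a + b) • (C c * (x ^ a * y ^ b)) := by
  rw [← MvPolynomial.smul_eq_C_mul, Derivation.map_smul, Derivation.leibniz,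
    euler_pow_x, euler_pow_y]
  simp only [smul_eq_mul, nsmul_eq_mul, MvPolynomial.smul_eq_C_mul]
  push_cast
  ring

lemma rep (c : ℂ) (a b : ℕ) :
    der (C c * (x ^ (a+1) * y ^ b)) (C c * (x ^ a * y ^ (b+1)))
      = (C c * (x ^ a * y ^ b)) • der x y := by
  apply MvPolynomial.derivation_ext
  intro i
  fin_cases i <;>
    simp [der_X, Derivation.smul_apply, euler_X, x, y, smul_eq_mul, pow_succ] <;> ring

lemma key_s7 (h k : R2) (n : ℕ) (hh : der x y h = n • h) (hk : der x y k = n • k) :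
    ⁅h • der x y, k • der x y⁆ = 0 := by
  apply MvPolynomial.derivation_ext
  intro i
  rw [Derivation.commutator_apply]
  simp only [Derivation.smul_apply, Derivation.leibniz, euler_X, hh, hk,
    smul_eq_mul, nsmul_eq_mul, Derivation.zero_apply, smul_add]
  ring

/-- Under the uniform isochronicity conditions `p_{0,d} = 0` and
`p_{d-i+1,i-1} = conj(p_{i,d-i})` (`1 ≤ i ≤ d`), all pairwise Lie brackets of the `d + 2`
comould operators `B_{(i-1,d-i)}`, `B_{(-1,d)}`, `B_{(d,-1)}` vanish, i.e. the Lie algebra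
they generate is nilpotent of order `1`.  Here `p i` denotes the coefficient `p_{i,d-i}`. -/
theorem stmt7 (d : ℕ) (hd : 2 ≤ d) (p : ℕ → ℂ)
    (h0 : p 0 = 0)
    (hu : ∀ i, 1 ≤ i → i ≤ d → p (d - i + 1) = starRingEnd ℂ (p i)) :
    ∀ D ∈ ({D : Derivation ℂ R2 R2 |
        (∃ i, 1 ≤ i ∧ i ≤ d ∧
          D = der (C (p i) * (x ^ i * y ^ (d - i)))
                (C (starRingEnd ℂ (p (d - i + 1))) * (x ^ (i - 1) * y ^ (d - i + 1)))) ∨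
        D = der (C (p 0) * y ^ d) 0 ∨
        D = der 0 (C (starRingEnd ℂ (p 0)) * x ^ d)} : Set (Derivation ℂ R2 R2)),
    ∀ E ∈ ({E : Derivation ℂ R2 R2 |
        (∃ i, 1 ≤ i ∧ i ≤ d ∧
          E = der (C (p i) * (x ^ i * y ^ (d - i)))
                (C (starRingEnd ℂ (p (d - i + 1))) * (x ^ (i - 1) * y ^ (d - i + 1)))) ∨
        E = der (C (p 0) * y ^ d) 0 ∨
        E = der 0 (C (starRingEnd ℂ (p 0)) * x ^ d)} : Set (Derivation ℂ R2 R2)),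
      ⁅D, E⁆ = 0 := by
  have hform : ∀ D ∈ ({D : Derivation ℂ R2 R2 |
        (∃ i, 1 ≤ i ∧ i ≤ d ∧
          D = der (C (p i) * (x ^ i * y ^ (d - i)))
                (C (starRingEnd ℂ (p (d - i + 1))) * (x ^ (i - 1) * y ^ (d - i + 1)))) ∨
        D = der (C (p 0) * y ^ d) 0 ∨
        D = der 0 (C (starRingEnd ℂ (p 0)) * x ^ d)} : Set (Derivation ℂ R2 R2)),
      D = 0 ∨ ∃ h : R2, D = h • der x y ∧ der x y h = (d - 1) • h := by
    rintro D (⟨i, hi1, hi2, rfl⟩ | rfl | rfl)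
    · right
      rw [hu i hi1 hi2, Complex.conj_conj]
      obtain ⟨a, rfl⟩ : ∃ a, i = a + 1 := ⟨i - 1, by omega⟩
      obtain ⟨b, rfl⟩ : ∃ b, d = a + 1 + b := ⟨d - (a + 1), by omega⟩
      refine ⟨C (p (a+1)) * (x ^ a * y ^ b), ?_, ?_⟩
      · have h1 : a + 1 + b - (a + 1) = b := by omega
        have h2 : a + 1 - 1 = a := by omega
        rw [h1, h2, rep]
      · have h3 : a + 1 + b - 1 = a + b := by omega
        rw [h3, eig]
    · left; simp [h0, der_zero]
    · left; simp [h0, der_zero]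
  intro D hD E hE
  rcases hform D hD with rfl | ⟨h, rfl, hh⟩
  · apply MvPolynomial.derivation_ext
    intro i
    simp [Derivation.commutator_apply]
  rcases hform E hE with rfl | ⟨k, rfl, hk⟩
  · apply MvPolynomial.derivation_ext
    intro i
    simp [Derivation.commutator_apply]
  exact key_s7 h k (d - 1) hh hk


end
end
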